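/- A subset C of the vertices of GP(n,k) is a perfect code if and only if n ≡ 0 (mod 4), k ≡ 1 (mod 2), and C = {u_{4i+j}, v_{4i+j+2} : i ∈ ℤ_n} for some j ∈ {0,1,2,3}. -/

import Mathlib

/-!
Read `u_i ∈ C` and `v_i ∈ C` as predicates `u`, `v` on `ZMod n`. Since codewords never share a
closed neighbourhood, the outer rim cannot carry two inner codewords `v_b, v_{b+1}` or
`v_b, v_{b+2}`, nor two outer codewords `u_t, u_{t+3}`. As every outer vertex is dominated by an
outer codeword at distance at most 1 or by its own `v`, a codeword `u_t` then forces `v_{t+2}`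
and `u_{t+4}`: the code is `u_j, v_{j+2}` repeated with period 4, so `4 ∣ n`, and the inner
codeword `v_{t+1±k}` dominating `v_{t+1}` gives `k ≡ ±1 (mod 4)`.

Conversely, reduction mod 4 maps each closed neighbourhood of GP(n,k) bijectively onto one of
GP(4,k), which for odd `k` is the 3-cube, and the preimage of its perfect code `{u_j, v_{j+2}}`
is a perfect code.
-/

/-- The generalized Petersen graph GP(n,k): vertices are `Sum.inl i` (outer, u_i)
and `Sum.inr i` (inner, v_i) for `i : ZMod n`. -/
def GP (n k : ℕ) : SimpleGraph (ZMod n ⊕ ZMod n) where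
  Adj x y :=
    match x, y with
    | .inl i, .inl j => i ≠ j ∧ (j = i + 1 ∨ i = j + 1)
    | .inl i, .inr j => i = j
    | .inr i, .inl j => i = j
    | .inr i, .inr j => i ≠ j ∧ (j = i + (k : ZMod n) ∨ i = j + (k : ZMod n))
  symm := ⟨by rintro (i|i) (j|j) h <;> simp_all <;> tauto⟩
  loopless := ⟨by rintro (i|i) h <;> simp_all⟩

/-- A perfect code: an independent set such that every vertex not in `C`
has exactly one neighbor in `C`. -/
def IsPerfectCode {V : Type*} (G : SimpleGraph V) (C : Set V) : Prop :=
  (∀ x ∈ C, ∀ y ∈ C, ¬ G.Adj x y) ∧ ∀ x ∉ C, ∃! y, y ∈ C ∧ G.Adj x y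

/-- A total perfect code: every vertex has exactly one neighbor in `C`. -/
def IsTotalPerfectCode {V : Type*} (G : SimpleGraph V) (C : Set V) : Prop :=
  ∀ x, ∃! y, y ∈ C ∧ G.Adj x y

open Sum

namespace SimpleGraph

def closedNeighborSet {V : Type*} (G : SimpleGraph V) (x : V) : Set V :=
  insert x (G.neighborSet x)

@[simp]
theorem mem_closedNeighborSet {V : Type*} {G : SimpleGraph V} {x y : V} :
    y ∈ G.closedNeighborSet x ↔ y = x ∨ G.Adj x y :=
  Iff.rfl

end SimpleGraph

open SimpleGraph

section PerfectCode
variable {V W : Type*} {G : SimpleGraph V} {H : SimpleGraph W}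

theorem isPerfectCode_iff_existsUnique {C : Set V} :
    IsPerfectCode G C ↔ ∀ x, ∃! y, y ∈ C ∧ y ∈ G.closedNeighborSet x := by
  simp only [mem_closedNeighborSet]
  refine ⟨fun ⟨hind, huniq⟩ x => ?_, fun h => ⟨fun x hx y hy hxy => ?_, fun x hx => ?_⟩⟩
  · by_cases hx : x ∈ C
    · refine ⟨x, ⟨hx, .inl rfl⟩, fun y ⟨hy, hyx⟩ => ?_⟩
      exact hyx.resolve_right (hind x hx y hy)
    · obtain ⟨y, hy, hyu⟩ := huniq x hx
      refine ⟨y, ⟨hy.1, .inr hy.2⟩, fun y' ⟨hy', hy'x⟩ => ?_⟩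
      rcases hy'x with rfl | hadj
      · exact absurd hy' hx
      · exact hyu y' ⟨hy', hadj⟩
  · exact G.irrefl ((h x).unique ⟨hx, .inl rfl⟩ ⟨hy, .inr hxy⟩ ▸ hxy)
  · obtain ⟨y, ⟨hy, hyx⟩, hyu⟩ := h x
    refine ⟨y, ⟨hy, hyx.resolve_left ?_⟩, fun y' hy' => hyu y' ⟨hy'.1, .inr hy'.2⟩⟩
    rintro rfl
    exact hx hy

theorem IsPerfectCode.preimage {f : V → W}
    (hf : ∀ x, Set.BijOn f (G.closedNeighborSet x) (H.closedNeighborSet (f x)))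
    {C : Set W} (hC : IsPerfectCode H C) : IsPerfectCode G (f ⁻¹' C) := by
  rw [isPerfectCode_iff_existsUnique] at hC ⊢
  intro x
  obtain ⟨_, ⟨hyC, hyN⟩, hyu⟩ := hC (f x)
  obtain ⟨y, hy, rfl⟩ := (hf x).surjOn hyN
  exact ⟨y, ⟨hyC, hy⟩, fun y' ⟨hy'C, hy'N⟩ =>
    (hf x).injOn hy'N hy (hyu _ ⟨hy'C, (hf x).mapsTo hy'N⟩)⟩

end PerfectCode

theorem ZMod.castHom_eq_castHom_iff {m n : ℕ} (h : m ∣ n) (x c : ZMod n) :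
    castHom h (ZMod m) x = castHom h (ZMod m) c ↔ ∃ i : ZMod n, x = m * i + c := by
  constructor
  · intro hx
    have hd : ((cast (x - c) : ℤ) : ZMod n) = x - c := intCast_zmod_cast _
    have h0 : ((cast (x - c) : ℤ) : ZMod m) = 0 := by
      rw [← map_intCast (castHom h (ZMod m)), hd, map_sub, hx, sub_self]
    obtain ⟨q, hq⟩ := (intCast_zmod_eq_zero_iff_dvd _ m).mp h0
    refine ⟨q, ?_⟩
    rw [← sub_eq_iff_eq_add, ← hd, hq]
    push_cast
    rfl
  · rintro ⟨i, rfl⟩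
    rw [map_add, map_mul, map_natCast, ZMod.natCast_self, zero_mul, zero_add]

theorem ZMod.natCast_four_eq_one_or_neg_one_iff {k : ℕ} :
    ((k : ZMod 4) = 1 ∨ (k : ZMod 4) = -1) ↔ k % 2 = 1 := by
  rw [← ZMod.natCast_mod k 4]
  have hk : k % 4 < 4 := Nat.mod_lt _ (by norm_num)
  have hk2 : k % 2 = k % 4 % 2 := (Nat.mod_mod_of_dvd k (by norm_num)).symm
  interval_cases h : k % 4 <;> simp [hk2] <;> decide

/-- `u i` and `v i` stand for `u_i ∈ C` and `v_i ∈ C`, for a perfect code `C` of a generalized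
Petersen graph with inner step `z`: every closed neighbourhood meets `C`, and no two codewords
share one. The pair `v_{i-z}, v_{i+z}` is left out, so that `2 * z = 0` needs no special case. -/
structure IsPetersenCode {R : Type*} [CommRing R] (z : R) (u v : R → Prop) : Prop where
  outer_cover : ∀ i, u (i - 1) ∨ u i ∨ u (i + 1) ∨ v i
  inner_cover : ∀ i, v (i - z) ∨ v i ∨ v (i + z) ∨ u i
  not_u_u_add_one : ∀ i, ¬(u i ∧ u (i + 1))
  not_u_u_add_two : ∀ i, ¬(u i ∧ u (i + 2))
  not_u_v : ∀ i, ¬(u i ∧ v i)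
  not_u_v_add_one : ∀ i, ¬(u i ∧ v (i + 1))
  not_v_u_add_one : ∀ i, ¬(v i ∧ u (i + 1))
  not_v_v_add : ∀ i, ¬(v i ∧ v (i + z))
  not_u_v_add : ∀ i, ¬(u i ∧ v (i + z))
  not_v_u_add : ∀ i, ¬(v i ∧ u (i + z))

namespace IsPetersenCode

section
variable {R : Type*} [CommRing R] {z : R} {u v : R → Prop} (h : IsPetersenCode z u v)
include h

theorem neg : IsPetersenCode (-z) u v where
  outer_cover := h.outer_cover
  inner_cover i := by
    rw [sub_neg_eq_add, ← sub_eq_add_neg]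
    have := h.inner_cover i
    tauto
  not_u_u_add_one := h.not_u_u_add_one
  not_u_u_add_two := h.not_u_u_add_two
  not_u_v := h.not_u_v
  not_u_v_add_one := h.not_u_v_add_one
  not_v_u_add_one := h.not_v_u_add_one
  not_v_v_add i := by simpa [and_comm, ← sub_eq_add_neg] using h.not_v_v_add (i - z)
  not_u_v_add i := by simpa [and_comm, ← sub_eq_add_neg] using h.not_v_u_add (i - z)
  not_v_u_add i := by simpa [and_comm, ← sub_eq_add_neg] using h.not_u_v_add (i - z)

theorem not_v_v_add_one (b : R) : ¬(v b ∧ v (b + 1)) := by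
  rintro ⟨hb, hb1⟩
  -- `u_{b±z}` and `u_{b+1±z}` are blocked, so `u_{b+z-1}` and `u_{b-z-1}` are codewords,
  -- and then nothing in the closed neighbourhood of `v_{b-1}` can be one.
  have := h.outer_cover (b + z)
  have := h.outer_cover (b - z)
  have := h.inner_cover (b - 1)
  have := h.not_v_u_add b
  have := h.not_v_u_add (b + 1)
  have := h.not_v_v_add b
  have := h.not_u_v_add (b - z)
  have := h.not_u_v_add (b + 1 - z)
  have := h.not_v_v_add (b - z)
  have := h.not_u_v_add_one (b - 1)
  have := h.not_v_u_add (b - 1)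
  have := h.not_u_v (b - 1 - z)
  have := h.not_u_v (b - 1 + z)
  clear h
  ring_nf at *
  grind

theorem not_v_v_add_two (b : R) : ¬(v b ∧ v (b + 2)) := by
  rintro ⟨hb, hb2⟩
  have := h.outer_cover (b + 1)
  have := h.not_v_v_add_one b
  have := h.not_u_v b
  have := h.not_v_u_add_one b
  have := h.not_u_v (b + 2)
  clear h
  ring_nf at *
  grind

theorem not_v_sub_of_u_of_u_add_three {t : R} (ht : u t) (ht3 : u (t + 3)) :
    ¬v (t + 1 - z) := by
  intro hv
  -- `v_{t-z}` and `v_{t+2-z}` can then only be dominated by `v_{t-2z}` and `v_{t+2-2z}`.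
  have := h.inner_cover (t - z)
  have := h.inner_cover (t + 2 - z)
  have := h.not_v_v_add_one (t - z)
  have := h.not_u_v t
  have := h.not_u_v_add_one (t - z)
  have := h.not_v_v_add_one (t + 1 - z)
  have := h.not_v_u_add_one (t + 2)
  have := h.not_v_u_add_one (t + 1 - z)
  have := h.not_v_v_add_two (t - z - z)
  clear h
  ring_nf at *
  grind

theorem not_u_u_add_three (t : R) : ¬(u t ∧ u (t + 3)) := by
  rintro ⟨ht, ht3⟩
  rcases h.inner_cover (t + 1) with hv | hv | hv | hu
  · exact h.not_v_sub_of_u_of_u_add_three ht ht3 hv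
  · exact h.not_u_v_add_one t ⟨ht, hv⟩
  · exact h.neg.not_v_sub_of_u_of_u_add_three ht ht3 (by rwa [sub_neg_eq_add])
  · exact h.not_u_u_add_one t ⟨ht, hu⟩

theorem exists_u : ∃ t, u t := by
  by_contra! hu
  have hv (i : R) : v i := by simpa [hu] using h.outer_cover i
  exact h.not_v_v_add_one 0 ⟨hv _, hv _⟩

theorem period {t : R} (ht : u t) :
    u (t + 4) ∧ v (t + 2) ∧ ¬u (t + 1) ∧ ¬u (t + 2) ∧ ¬u (t + 3) ∧
      ¬v t ∧ ¬v (t + 1) ∧ ¬v (t + 3) := by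
  have := h.outer_cover (t + 2)
  have := h.outer_cover (t + 3)
  have := h.not_u_u_add_one t
  have := h.not_u_u_add_two t
  have := h.not_u_u_add_three t
  have := h.not_u_v t
  have := h.not_u_v_add_one t
  have := h.not_v_v_add_one (t + 2)
  clear h
  ring_nf at *
  grind

theorem iff_add_natCast {t : R} (ht : u t) (m : ℕ) :
    (u (t + m) ↔ (m : ZMod 4) = 0) ∧ (v (t + m) ↔ (m : ZMod 4) = 2) := by
  induction m using Nat.strong_induction_on generalizing t with
  | _ m ih =>
    obtain ⟨hu4, hv2, hu1, hu2, hu3, hv0, hv1, hv3⟩ := h.period ht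
    by_cases hm : m < 4
    · interval_cases m <;> simp_all <;> decide
    · obtain ⟨m, rfl⟩ : ∃ m', m = m' + 4 := ⟨m - 4, by omega⟩
      have hR : t + ((m + 4 : ℕ) : R) = t + 4 + m := by push_cast; ring
      have h4 : ((m + 4 : ℕ) : ZMod 4) = m := by simp [show (4 : ZMod 4) = 0 from rfl]
      rw [hR, h4]
      exact ih m (by omega) hu4

end

section ZMod
variable {n : ℕ} {z : ZMod n} {u v : ZMod n → Prop} (h : IsPetersenCode z u v)
include h

theorem four_dvd : 4 ∣ n := by
  obtain ⟨t, ht⟩ := h.exists_u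
  have := (h.iff_add_natCast ht n).1
  rw [ZMod.natCast_self, add_zero] at this
  exact (ZMod.natCast_eq_zero_iff n 4).mp (this.mp ht)

theorem iff_castHom_eq [NeZero n] (h4 : 4 ∣ n) {t : ZMod n} (ht : u t) (x : ZMod n) :
    (u x ↔ ZMod.castHom h4 (ZMod 4) x = ZMod.castHom h4 (ZMod 4) t) ∧
      (v x ↔ ZMod.castHom h4 (ZMod 4) x = ZMod.castHom h4 (ZMod 4) t + 2) := by
  have hm : ((x - t).val : ZMod 4) = ZMod.castHom h4 (ZMod 4) x - ZMod.castHom h4 (ZMod 4) t := by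
    rw [← map_natCast (ZMod.castHom h4 (ZMod 4)), ZMod.natCast_zmod_val, map_sub]
  have := h.iff_add_natCast ht (x - t).val
  rwa [ZMod.natCast_zmod_val, add_sub_cancel, hm, sub_eq_zero, sub_eq_iff_eq_add'] at this

theorem castHom_eq_one_or_neg_one [NeZero n] (h4 : 4 ∣ n) :
    ZMod.castHom h4 (ZMod 4) z = 1 ∨ ZMod.castHom h4 (ZMod 4) z = -1 := by
  obtain ⟨t, ht⟩ := h.exists_u
  obtain ⟨-, -, hu1, -, -, -, hv1, -⟩ := h.period ht
  rcases h.inner_cover (t + 1) with hv | hv | hv | hu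
  · right
    have := (h.iff_castHom_eq h4 ht _).2.mp hv
    simp only [map_sub, map_add, map_one] at this
    linear_combination -this
  · exact absurd hv hv1
  · left
    have := (h.iff_castHom_eq h4 ht _).2.mp hv
    simp only [map_add, map_one] at this
    linear_combination this
  · exact absurd hu hu1

end ZMod

end IsPetersenCode

namespace GP
variable {n k : ℕ}

@[simp]
theorem closedNeighborSet_inl (i : ZMod n) :
    (GP n k).closedNeighborSet (inl i) = {inl (i - 1), inl i, inl (i + 1), inr i} := by
  ext (j | j)
  · simp only [mem_closedNeighborSet, Set.mem_insert_iff, Set.mem_singleton_iff, inl.injEq,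
      reduceCtorEq, or_false, GP]
    grind
  · simp [GP, eq_comm]

@[simp]
theorem closedNeighborSet_inr (i : ZMod n) :
    (GP n k).closedNeighborSet (inr i) = {inr (i - k), inr i, inr (i + k), inl i} := by
  ext (j | j)
  · simp [GP, eq_comm]
  · simp only [mem_closedNeighborSet, Set.mem_insert_iff, Set.mem_singleton_iff, inr.injEq,
      reduceCtorEq, or_false, GP]
    grind

theorem isPetersenCode_of_isPerfectCode (hn : 3 ≤ n) (hk : (k : ZMod n) ≠ 0)
    {C : Set (ZMod n ⊕ ZMod n)} (hC : IsPerfectCode (GP n k) C) :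
    IsPetersenCode (k : ZMod n) (fun i => inl i ∈ C) (fun i => inr i ∈ C) := by
  rw [isPerfectCode_iff_existsUnique] at hC
  have pack (w : ZMod n ⊕ ZMod n) {x y} (hx : x ∈ C) (hy : y ∈ C)
      (hxw : x ∈ (GP n k).closedNeighborSet w) (hyw : y ∈ (GP n k).closedNeighborSet w) :
      x = y :=
    (hC w).unique ⟨hx, hxw⟩ ⟨hy, hyw⟩
  have h2 : (2 : ZMod n) ≠ 0 := by
    rw [← Nat.cast_ofNat, Ne, ZMod.natCast_eq_zero_iff]
    exact fun h => absurd (Nat.le_of_dvd two_pos h) (by omega)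
  have h1 : (1 : ZMod n) ≠ 0 := fun h => h2 (by linear_combination 2 * h)
  exact {
    outer_cover i := by
      obtain ⟨y, ⟨hy, hyN⟩, -⟩ := hC (inl i)
      simp only [closedNeighborSet_inl, Set.mem_insert_iff, Set.mem_singleton_iff] at hyN
      rcases hyN with rfl | rfl | rfl | rfl <;> simp [hy]
    inner_cover i := by
      obtain ⟨y, ⟨hy, hyN⟩, -⟩ := hC (inr i)
      simp only [closedNeighborSet_inr, Set.mem_insert_iff, Set.mem_singleton_iff] at hyN
      rcases hyN with rfl | rfl | rfl | rfl <;> simp [hy]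
    not_u_u_add_one i := fun ⟨hx, hy⟩ => h1 <| by
      simpa using pack (inl i) hx hy (by simp) (by simp)
    not_u_u_add_two i := fun ⟨hx, hy⟩ => h2 <| by
      simpa using pack (inl (i + 1)) hx hy (by simp) (by simp [add_assoc, one_add_one_eq_two])
    not_u_v i := fun ⟨hx, hy⟩ => by simpa using pack (inl i) hx hy (by simp) (by simp)
    not_u_v_add_one i := fun ⟨hx, hy⟩ => by
      simpa using pack (inl (i + 1)) hx hy (by simp) (by simp)
    not_v_u_add_one i := fun ⟨hx, hy⟩ => by simpa using pack (inl i) hx hy (by simp) (by simp)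
    not_v_v_add i := fun ⟨hx, hy⟩ => hk <| by
      simpa using pack (inr i) hx hy (by simp) (by simp)
    not_u_v_add i := fun ⟨hx, hy⟩ => by simpa using pack (inr i) hx hy (by simp) (by simp)
    not_v_u_add i := fun ⟨hx, hy⟩ => by
      simpa using pack (inr (i + k)) hx hy (by simp) (by simp) }

theorem bijOn_closedNeighborSet {m : ℕ} (hmn : m ∣ n) (h2 : (2 : ZMod m) ≠ 0)
    (h2k : 2 * (k : ZMod m) ≠ 0) (x : ZMod n ⊕ ZMod n) :
    Set.BijOn (Sum.map (ZMod.castHom hmn (ZMod m)) (ZMod.castHom hmn (ZMod m)))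
      ((GP n k).closedNeighborSet x)
      ((GP m k).closedNeighborSet
        (Sum.map (ZMod.castHom hmn (ZMod m)) (ZMod.castHom hmn (ZMod m)) x)) := by
  set π := ZMod.castHom hmn (ZMod m)
  have h1 : (1 : ZMod m) ≠ 0 := fun h => h2 (by linear_combination 2 * h)
  have hk : (k : ZMod m) ≠ 0 := fun h => h2k (by rw [h, mul_zero])
  have hinj : Set.InjOn (Sum.map π π) ((GP n k).closedNeighborSet x) := by
    rcases x with i | i <;>
    · simp only [closedNeighborSet_inl, closedNeighborSet_inr]
      rintro y₁ hy₁ y₂ hy₂ he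
      simp only [Set.mem_insert_iff, Set.mem_singleton_iff] at hy₁ hy₂
      rcases hy₁ with rfl | rfl | rfl | rfl <;> rcases hy₂ with rfl | rfl | rfl | rfl <;>
        simp [sub_eq_add_neg, neg_eq_iff_add_eq_zero, eq_neg_iff_add_eq_zero, ← two_mul,
          h1, hk, h2, h2k] at he ⊢
  convert hinj.bijOn_image
  rcases x with i | i <;> simp [Set.image_insert_eq]

set_option synthInstance.maxSize 1024 in
theorem isPerfectCode_four (hk : (k : ZMod 4) = 1 ∨ (k : ZMod 4) = -1) (j : ZMod 4) :
    IsPerfectCode (GP 4 k) {inl j, inr (j + 2)} := by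
  rw [isPerfectCode_iff_existsUnique]
  rintro (i | i) <;>
    simp only [closedNeighborSet_inl, closedNeighborSet_inr, Set.mem_insert_iff,
      Set.mem_singleton_iff]
  · revert i j
    unfold ExistsUnique
    beta_reduce
    decide
  · generalize (k : ZMod 4) = κ at hk ⊢
    rcases hk with rfl | rfl <;> revert i j <;> unfold ExistsUnique <;> beta_reduce <;> decide

theorem setOf_eq_preimage (h4 : 4 ∣ n) (j : ℕ) :
    {x : ZMod n ⊕ ZMod n | ∃ i : ZMod n, x = .inl (4 * i + (j : ZMod n)) ∨
        x = .inr (4 * i + (j : ZMod n) + 2)} =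
      Sum.map (ZMod.castHom h4 (ZMod 4)) (ZMod.castHom h4 (ZMod 4)) ⁻¹'
        {inl (j : ZMod 4), inr ((j : ZMod 4) + 2)} := by
  set π := ZMod.castHom h4 (ZMod 4)
  have hj : ((j : ℕ) : ZMod 4) = π j := (map_natCast π j).symm
  have hj2 : ((j : ℕ) : ZMod 4) + 2 = π (j + 2) := by rw [map_add, map_natCast, map_ofNat]
  ext (a | a)
  · simp only [Set.mem_ofPred_eq, Set.mem_preimage, Sum.map_inl, Set.mem_insert_iff,
      Set.mem_singleton_iff, inl.injEq, reduceCtorEq, or_false]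
    rw [hj, ZMod.castHom_eq_castHom_iff, Nat.cast_ofNat]
  · simp only [Set.mem_ofPred_eq, Set.mem_preimage, Sum.map_inr, Set.mem_insert_iff,
      Set.mem_singleton_iff, inr.injEq, reduceCtorEq, false_or, add_assoc]
    rw [hj2, ZMod.castHom_eq_castHom_iff, Nat.cast_ofNat]

end GP

/-- Theorem 1.1: C is a perfect code in GP(n,k) iff n ≡ 0 (mod 4), k ≡ 1 (mod 2),
and C = {u_{4i+j}, v_{4i+j+2} : i ∈ ℤ_n} for some j ∈ {0,1,2,3}. -/
theorem stmt_7 (n k : ℕ) (hn : 3 ≤ n) (hk0 : (k : ZMod n) ≠ 0)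
    (C : Set (ZMod n ⊕ ZMod n)) :
    IsPerfectCode (GP n k) C ↔
      n % 4 = 0 ∧ k % 2 = 1 ∧ ∃ j : ℕ, j < 4 ∧
        C = {x | ∃ i : ZMod n, x = .inl (4 * i + (j : ZMod n)) ∨
          x = .inr (4 * i + (j : ZMod n) + 2)} := by
  have : NeZero n := ⟨by omega⟩
  constructor
  · intro hC
    have h := GP.isPetersenCode_of_isPerfectCode hn hk0 hC
    have h4 := h.four_dvd
    obtain ⟨t, ht⟩ := h.exists_u
    refine ⟨Nat.mod_eq_zero_of_dvd h4, ZMod.natCast_four_eq_one_or_neg_one_iff.mp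
      (by simpa using h.castHom_eq_one_or_neg_one h4), (ZMod.castHom h4 (ZMod 4) t).val,
      ZMod.val_lt _, ?_⟩
    rw [GP.setOf_eq_preimage h4, ZMod.natCast_zmod_val]
    ext (a | a) <;> simp [h.iff_castHom_eq h4 ht]
  · rintro ⟨hn4, hk2, j, -, rfl⟩
    have h4 : 4 ∣ n := Nat.dvd_of_mod_eq_zero hn4
    have hk := ZMod.natCast_four_eq_one_or_neg_one_iff.mpr hk2
    rw [GP.setOf_eq_preimage h4]
    exact (GP.isPerfectCode_four hk _).preimage (GP.bijOn_closedNeighborSet h4 (by decide)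
      (by rcases hk with hk | hk <;> rw [hk] <;> decide))
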